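/- For every real number r, every natural number p, and every real x with |x| < 1, the binomial series identity Σ_{n=0}^∞ C(r,n) n^p x^n = (1 + x)^r Σ_{k=0}^p S(p,k) r(r−1)⋯(r−k+1) (x/(1+x))^k holds (with the convention 0^0 = 1), where C(r,n) = r(r−1)⋯(r−n+1)/n! is the generalized binomial coefficient and the series on the left converges absolutely. -/

import Mathlib

/-!
Expanding `n ^ p = ∑ₖ S(p, k) n(n-1)⋯(n-k+1)` splits the series into `p + 1` series
`∑ₙ C(r, n) n(n-1)⋯(n-k+1) xⁿ`. Since `C(r, n) n(n-1)⋯(n-k+1) = r(r-1)⋯(r-k+1) C(r-k, n-k)`,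
the `k`-th of them is `r(r-1)⋯(r-k+1) xᵏ` times the binomial series of `(1 + x) ^ (r - k)`.
-/

open Finset Real

def stirling2 : ℕ → ℕ → ℕ
  | 0, 0 => 1
  | 0, _ + 1 => 0
  | _ + 1, 0 => 0
  | n + 1, k + 1 => (k + 1) * stirling2 n (k + 1) + stirling2 n k

section

open Polynomial

theorem stirling2_eq_stirlingSecond : stirling2 = Nat.stirlingSecond := by
  ext n k
  induction n generalizing k with
  | zero => cases k <;> rfl
  | succ n ih => cases k <;> simp [stirling2, Nat.stirlingSecond_succ_succ, ih]

theorem Polynomial.X_pow_eq_sum_stirlingSecond_mul_descPochhammer (R : Type*) [CommRing R]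
    (p : ℕ) :
    (X : R[X]) ^ p = ∑ k ∈ range (p + 1), (p.stirlingSecond k : R[X]) * descPochhammer R k := by
  induction p with
  | zero => simp
  | succ p ih =>
    have hX (k : ℕ) :
        descPochhammer R k * X = descPochhammer R (k + 1) + (k : R[X]) * descPochhammer R k := by
      rw [descPochhammer_succ_right]; ring
    have hshift : ∑ k ∈ range (p + 1), (p.stirlingSecond k * k : R[X]) * descPochhammer R k =
        ∑ k ∈ range (p + 1), (p.stirlingSecond (k + 1) * (k + 1) : R[X]) *
          descPochhammer R (k + 1) := by
      rw [sum_range_succ', sum_range_succ, Nat.stirlingSecond_eq_zero_of_lt p.lt_succ_self]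
      simp
    calc (X : R[X]) ^ (p + 1)
        = ∑ k ∈ range (p + 1), (p.stirlingSecond k : R[X]) * (descPochhammer R k * X) := by
          rw [pow_succ, ih, sum_mul]; simp only [mul_assoc]
      _ = ∑ k ∈ range (p + 1), ((p.stirlingSecond (k + 1) * (k + 1) + p.stirlingSecond k : R[X]))
            * descPochhammer R (k + 1) := by
          simp only [hX, mul_add, sum_add_distrib, ← mul_assoc, hshift, add_mul]
          rw [add_comm]
      _ = _ := by
          rw [sum_range_succ' _ (p + 1)]
          simp [Nat.stirlingSecond_succ_succ, mul_comm]

theorem Nat.cast_pow_eq_sum_stirlingSecond_mul_descFactorial (R : Type*) [CommRing R] (n p : ℕ) :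
    (n : R) ^ p = ∑ k ∈ range (p + 1), (p.stirlingSecond k : R) * n.descFactorial k := by
  simpa [eval_finsetSum, descPochhammer_eval_eq_descFactorial] using
    congrArg (eval (n : R)) (X_pow_eq_sum_stirlingSecond_mul_descPochhammer R p)

theorem Ring.choose_eq_descPochhammer_eval_div_factorial {K : Type*} [Field K] [CharZero K]
    (a : K) (n : ℕ) : Ring.choose a n = (descPochhammer K n).eval a / n.factorial := by
  rw [Ring.choose_eq_smul, ← aeval_eq_smeval, aeval_def, algebraMap_int_eq, ← eval_map,
    descPochhammer_map, smul_eq_mul, inv_mul_eq_div]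

theorem Ring.descFactorial_mul_choose_add {K : Type*} [Field K] [CharZero K] (a : K) (m k : ℕ) :
    ((m + k).descFactorial k : K) * Ring.choose a (m + k) =
      (descPochhammer K k).eval a * Ring.choose (a - k) m := by
  have h := congrArg ((k.factorial : K) * ·) (Ring.choose_smul_choose a (Nat.le_add_left k m))
  simp only [Nat.add_sub_cancel, nsmul_eq_mul] at h
  rw [Nat.descFactorial_eq_factorial_mul_choose, Nat.cast_mul, mul_assoc, h, ← mul_assoc,
    choose_eq_descPochhammer_eval_div_factorial a k, mul_div_cancel₀]
  exact_mod_cast k.factorial_ne_zero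

theorem Real.hasSum_choose_mul_pow (a : ℝ) {x : ℝ} (hx : |x| < 1) :
    HasSum (fun n => Ring.choose a n * x ^ n) ((1 + x) ^ a) := by
  have hx' : x ∈ Metric.eball (0 : ℝ) 1 := by
    rw [mem_eball_zero_iff, ← ofReal_norm, ENNReal.ofReal_lt_one]
    simpa using hx
  simpa [binomialSeries, FormalMultilinearSeries.coeff_ofScalars, mul_comm]
    using one_add_rpow_hasFPowerSeriesOnBall_zero.hasSum hx'

theorem Real.hasSum_choose_mul_descFactorial_mul_pow (a : ℝ) (k : ℕ) {x : ℝ} (hx : |x| < 1) :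
    HasSum (fun n : ℕ => Ring.choose a n * n.descFactorial k * x ^ n)
      ((descPochhammer ℝ k).eval a * x ^ k * (1 + x) ^ (a - k)) := by
  have hshift : (fun n : ℕ => Ring.choose a n * n.descFactorial k * x ^ n) ∘ (· + k) =
      fun m => (descPochhammer ℝ k).eval a * x ^ k * (Ring.choose (a - k) m * x ^ m) := by
    ext m
    simp only [Function.comp_apply, pow_add]
    linear_combination x ^ m * x ^ k * Ring.descFactorial_mul_choose_add a m k
  have hvanish : ∀ n ∉ Set.range (· + k),
      Ring.choose a n * n.descFactorial k * x ^ n = 0 := by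
    intro n hn
    have hnk : n < k := by
      by_contra! h
      exact hn ⟨n - k, Nat.sub_add_cancel h⟩
    simp [Nat.descFactorial_eq_zero_iff_lt.2 hnk]
  rw [← (add_left_injective k).hasSum_iff hvanish, hshift]
  exact (hasSum_choose_mul_pow (a - k) hx).mul_left _

end

/-- For real `r`, natural `p`, and `|x| < 1`,
`Σ_{n=0}^∞ C(r,n) n^p x^n = (1+x)^r Σ_{k=0}^p S(p,k) r(r−1)⋯(r−k+1) (x/(1+x))^k`
(with `0^0 = 1`), where `C(r,n) = r(r−1)⋯(r−n+1)/n!` and the series converges absolutely.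
Here `(descPochhammer ℝ k).eval r = r(r−1)⋯(r−k+1)` is the falling factorial. -/
theorem binomial_series_geomPoly (r : ℝ) (p : ℕ) (x : ℝ) (hx : |x| < 1) :
    (Summable fun n : ℕ =>
      |(descPochhammer ℝ n).eval r / n.factorial * (n : ℝ) ^ p * x ^ n|) ∧
    HasSum (fun n : ℕ => (descPochhammer ℝ n).eval r / n.factorial * (n : ℝ) ^ p * x ^ n)
      ((1 + x) ^ r * ∑ k ∈ Finset.range (p + 1),
        (stirling2 p k : ℝ) * (descPochhammer ℝ k).eval r * (x / (1 + x)) ^ k) := by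
  have hx1 : 0 < 1 + x := by linarith [(abs_lt.1 hx).1]
  have hterm : ∀ n : ℕ, (descPochhammer ℝ n).eval r / n.factorial * (n : ℝ) ^ p * x ^ n =
      ∑ k ∈ range (p + 1),
        (p.stirlingSecond k : ℝ) * (Ring.choose r n * n.descFactorial k * x ^ n) := by
    intro n
    rw [← Ring.choose_eq_descPochhammer_eval_div_factorial,
      Nat.cast_pow_eq_sum_stirlingSecond_mul_descFactorial, mul_sum, sum_mul]
    exact sum_congr rfl fun k _ => by ring
  have hvalue : (1 + x) ^ r * ∑ k ∈ range (p + 1),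
        (stirling2 p k : ℝ) * (descPochhammer ℝ k).eval r * (x / (1 + x)) ^ k =
      ∑ k ∈ range (p + 1), (p.stirlingSecond k : ℝ) *
        ((descPochhammer ℝ k).eval r * x ^ k * (1 + x) ^ (r - k)) := by
    rw [mul_sum]
    refine sum_congr rfl fun k _ => ?_
    rw [stirling2_eq_stirlingSecond, rpow_sub hx1, rpow_natCast, div_pow]
    field_simp
  have hsum := hasSum_sum fun k (_ : k ∈ range (p + 1)) =>
    (hasSum_choose_mul_descFactorial_mul_pow r k hx).mul_left (p.stirlingSecond k : ℝ)
  simp only [← hterm, ← hvalue] at hsum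
  -- `Summable` is unconditional summability, which for real series is absolute summability
  exact ⟨hsum.summable.abs, hsum⟩
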